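/- Let I be a nonzero fractional ideal of B, let q_I ∈ K× be such that I ∩ K = q_I·k[t], and set I* = q_I^{−1}·I (the normalized ideal). Then k[t][x] ⊆ B ⊆ I*. Moreover, setting δ_I = dim_k(I*/k[t][x]) (the normalized index, which is finite) and exp(I) = min{ deg(a) : a ∈ k[t], a ≠ 0, a·I* ⊆ k[t][x] } (the normalized exponent), one has exp(I) ≤ δ_I ≤ n·exp(I); in particular 0 ≤ δ_B ≤ δ_I and 0 ≤ exp(B) ≤ exp(I). -/

import Mathlib

/-!
Since `f` is monic, `x` is integral over `k[t]`, so `k[t][x] ⊆ B`; and `q_I ∈ I` gives `1 ∈ I*`,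
so `B ⊆ I*`. Let `Q = I* / (I* ∩ k[t][x])`, a `k[t]`-module. Because `L/K` is separable, `B` and
hence `I*` are finitely generated, so free of rank `≤ n`, over `k[t]`; because `L = K[x]`, `Q` is
torsion. If a polynomial `a` of degree `exp(I)` kills `Q`, then `Q` is spanned over `k` by the
`tʲ eᵢ` with `j < deg a` and `eᵢ` a basis of `I*`, so `δ_I ≤ n · exp(I)`. Conversely, by
Cayley–Hamilton the characteristic polynomial of multiplication by `t` on `Q` kills `Q`, and its
degree is `δ_I`, so `exp(I) ≤ δ_I`. Finally `B / k[t][x]` embeds into `Q`.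
-/

/-- The normalized index `δ_J = dim_k (J / k[t][x])` of a fractional ideal `J` of `B`. -/
noncomputable def normIdx (k : Type*) [Field k] (L : Type*) [Field L] [Algebra (RatFunc k) L]
    [Algebra (Polynomial k) L] [Algebra k L] [IsScalarTower k (Polynomial k) L]
    (B : Type*) [CommRing B] [Algebra B L] [Algebra k B] [IsScalarTower k B L]
    (x : L) (J : FractionalIdeal (nonZeroDivisors B) L) : ℕ :=
  Module.finrank k
    ((Submodule.restrictScalars k (J : Submodule B L)) ⧸
      (Submodule.comap (Submodule.restrictScalars k (J : Submodule B L)).subtype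
        (Submodule.restrictScalars k
          (Subalgebra.toSubmodule (Algebra.adjoin (Polynomial k) ({x} : Set L))))))

/-- The normalized exponent: the least degree of a nonzero `a ∈ k[t]` with `a·J ⊆ k[t][x]`. -/
noncomputable def normExp (k : Type*) [Field k] (L : Type*) [Field L] [Algebra (RatFunc k) L]
    [Algebra (Polynomial k) L]
    (B : Type*) [CommRing B] [Algebra B L]
    (x : L) (J : FractionalIdeal (nonZeroDivisors B) L) : ℕ :=
  sInf {d : ℕ | ∃ a : Polynomial k, a ≠ 0 ∧ a.natDegree = d ∧
    ∀ z : L, z ∈ J → algebraMap (RatFunc k) L (algebraMap (Polynomial k) (RatFunc k) a) * z ∈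
      Algebra.adjoin (Polynomial k) ({x} : Set L)}

open Polynomial Module
open scoped nonZeroDivisors

section TorsionModule

variable (k : Type*) [Field k] (M : Type*) [AddCommGroup M] [Module k[X] M]

noncomputable def minTorsionDegree : ℕ :=
  sInf {d : ℕ | ∃ a : k[X], a ≠ 0 ∧ a.natDegree = d ∧ IsTorsionBy k[X] M a}

variable {k M}

theorem minTorsionDegree_le {a : k[X]} (ha : a ≠ 0) (haM : IsTorsionBy k[X] M a) :
    minTorsionDegree k M ≤ a.natDegree :=
  Nat.sInf_le ⟨a, ha, rfl, haM⟩

theorem exists_natDegree_eq_minTorsionDegree (h : ∃ a : k[X], a ≠ 0 ∧ IsTorsionBy k[X] M a) :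
    ∃ a : k[X], a ≠ 0 ∧ a.natDegree = minTorsionDegree k M ∧ IsTorsionBy k[X] M a := by
  obtain ⟨a, ha, haM⟩ := h
  have hne : {d : ℕ | ∃ a : k[X], a ≠ 0 ∧ a.natDegree = d ∧ IsTorsionBy k[X] M a}.Nonempty :=
    ⟨a.natDegree, a, ha, rfl, haM⟩
  exact Nat.sInf_mem hne

theorem minTorsionDegree_le_of_injective {M' : Type*} [AddCommGroup M'] [Module k[X] M']
    {φ : M →ₗ[k[X]] M'} (hφ : Function.Injective φ)
    (h : ∃ a : k[X], a ≠ 0 ∧ IsTorsionBy k[X] M' a) :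
    minTorsionDegree k M ≤ minTorsionDegree k M' := by
  obtain ⟨a, ha, hdeg, haM'⟩ := exists_natDegree_eq_minTorsionDegree h
  refine hdeg ▸ minTorsionDegree_le ha fun y => hφ ?_
  rw [map_smul, haM', map_zero]

variable [Module k M] [IsScalarTower k k[X] M]

theorem Polynomial.finrank_degreeLT (e : ℕ) : finrank k (degreeLT k e) = e := by
  rw [(degreeLTEquiv k e).finrank_eq, finrank_fin_fun]

/-- `c ↦ ∑ cᵢ • gᵢ` on coefficient vectors of degree `< e`. -/
noncomputable def sumSmulDegreeLT {ι : Type*} [Fintype ι] (g : ι → M) (e : ℕ) :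
    (ι → degreeLT k e) →ₗ[k] M :=
  (Fintype.linearCombination k[X] g).restrictScalars k ∘ₗ (degreeLT k e).subtype.compLeft ι

theorem sumSmulDegreeLT_surjective {ι : Type*} [Fintype ι] {g : ι → M}
    (hg : Submodule.span k[X] (Set.range g) = ⊤) {a : k[X]} (ha : a ≠ 0)
    (hM : IsTorsionBy k[X] M a) : Function.Surjective (sumSmulDegreeLT (k := k) g a.natDegree) := by
  intro y
  obtain ⟨c, rfl⟩ :=
    (Submodule.mem_span_range_iff_exists_fun _).mp (hg ▸ Submodule.mem_top (x := y))
  have hmod : ∀ i, c i % a ∈ degreeLT k a.natDegree := fun i => by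
    rw [mem_degreeLT, ← degree_eq_natDegree ha]
    exact degree_mod_lt _ ha
  refine ⟨fun i => ⟨c i % a, hmod i⟩, Finset.sum_congr rfl fun i _ => ?_⟩
  conv_rhs => rw [← EuclideanDomain.div_add_mod (c i) a]
  rw [add_smul, mul_smul, hM, zero_add]
  rfl

theorem finite_and_finrank_le_of_isTorsionBy {ι : Type*} [Fintype ι] {g : ι → M}
    (hg : Submodule.span k[X] (Set.range g) = ⊤) {a : k[X]} (ha : a ≠ 0)
    (hM : IsTorsionBy k[X] M a) :
    Module.Finite k M ∧ finrank k M ≤ Fintype.card ι * a.natDegree := by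
  have hsurj := sumSmulDegreeLT_surjective (k := k) hg ha hM
  refine ⟨Module.Finite.of_surjective _ hsurj, ?_⟩
  calc finrank k M ≤ finrank k (ι → degreeLT k a.natDegree) :=
        LinearMap.finrank_le_finrank_of_surjective hsurj
    _ = Fintype.card ι * a.natDegree := by
        simp [finrank_pi_fintype, finrank_degreeLT]

theorem finite_and_finrank_quotient_le [Module.Free k[X] M] [Module.Finite k[X] M]
    {P : Submodule k[X] M} (h : ∃ a : k[X], a ≠ 0 ∧ IsTorsionBy k[X] (M ⧸ P) a) :
    Module.Finite k (M ⧸ P) ∧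
      finrank k (M ⧸ P) ≤ finrank k[X] M * minTorsionDegree k (M ⧸ P) := by
  obtain ⟨a, ha, hdeg, haQ⟩ := exists_natDegree_eq_minTorsionDegree h
  let b := Free.chooseBasis k[X] M
  have hspan : Submodule.span k[X] (Set.range (P.mkQ ∘ b)) = ⊤ := by
    rw [Set.range_comp, Submodule.span_image, b.span_eq, Submodule.map_top, Submodule.range_mkQ]
  rw [finrank_eq_card_chooseBasisIndex (R := k[X]) (M := M), ← hdeg]
  exact finite_and_finrank_le_of_isTorsionBy hspan ha haQ

theorem isTorsionBy_charpoly [Module.Finite k M] :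
    IsTorsionBy k[X] M (LinearMap.charpoly (Algebra.lsmul k k M (X : k[X]))) := by
  intro y
  have h := congrArg (· y) (LinearMap.aeval_self_charpoly (Algebra.lsmul k k M (X : k[X])))
  rw [Polynomial.aeval_algHom, AlgHom.comp_apply, aeval_X_left, AlgHom.id_apply] at h
  exact h

theorem minTorsionDegree_le_finrank [Module.Finite k M] : minTorsionDegree k M ≤ finrank k M :=
  LinearMap.charpoly_natDegree (Algebra.lsmul k k M (X : k[X])) ▸
    minTorsionDegree_le (LinearMap.charpoly_monic _).ne_zero isTorsionBy_charpoly

end TorsionModule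

theorem exists_isTorsionBy_quotient {R M : Type*} [CommRing R] [IsDomain R] [AddCommGroup M]
    [Module R M] [Module.Finite R M] {P : Submodule R M} (h : ∀ y : M, ∃ d ∈ R⁰, d • y ∈ P) :
    ∃ a : R, a ≠ 0 ∧ IsTorsionBy R (M ⧸ P) a := by
  have htors : IsTorsion R (M ⧸ P) := fun {q} => by
    obtain ⟨y, rfl⟩ := P.mkQ_surjective q
    obtain ⟨d, hd, hdy⟩ := h y
    exact ⟨⟨d, hd⟩, (Submodule.Quotient.mk_eq_zero P).mpr hdy⟩
  obtain ⟨a, ha, ha0⟩ := Submodule.annihilator_top_inter_nonZeroDivisors htors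
  exact ⟨a, nonZeroDivisors.ne_zero ha0, fun q => Submodule.mem_annihilator.mp ha q trivial⟩

theorem exists_smul_mem_adjoin_of_adjoin_eq_top {R K L : Type*} [CommRing R] [Field K]
    [Algebra R K] [IsFractionRing R K] [CommRing L] [Algebra K L] [Algebra R L]
    [IsScalarTower R K L] {x : L} (hx : Algebra.adjoin K {x} = ⊤) (z : L) :
    ∃ d ∈ R⁰, d • z ∈ Algebra.adjoin R {x} := by
  have hz : z ∈ Algebra.adjoin K {x} := hx ▸ Algebra.mem_top
  rw [Algebra.adjoin_singleton_eq_range_aeval, AlgHom.mem_range] at hz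
  obtain ⟨g, rfl⟩ := hz
  obtain ⟨d, hd, hdg⟩ := IsLocalization.integerNormalization_spec R⁰ g
  refine ⟨d, hd, ?_⟩
  rw [Algebra.adjoin_singleton_eq_range_aeval, AlgHom.mem_range]
  refine ⟨IsLocalization.integerNormalization R⁰ g, ?_⟩
  rw [← aeval_map_algebraMap K x (IsLocalization.integerNormalization R⁰ g), hdg,
    ← algebraMap_smul K d g, map_smul, algebraMap_smul]

theorem Submodule.finrank_le_finrank_fractionRing {R K L : Type*} [CommRing R] [IsDomain R]
    [Field K] [Algebra R K] [IsFractionRing R K] [AddCommGroup L] [Module K L] [Module R L]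
    [IsScalarTower R K L] [FiniteDimensional K L] (N : Submodule R L) [Module.Free R N]
    [Module.Finite R N] : finrank R N ≤ finrank K L := by
  let b := Free.chooseBasis R N
  have hli : LinearIndependent R (fun i => (b i : L)) :=
    b.linearIndependent.map' N.subtype (Submodule.ker_subtype N)
  rw [LinearIndependent.iff_fractionRing R K] at hli
  rw [finrank_eq_card_chooseBasisIndex]
  exact hli.fintype_card_le_finrank

section SimpleGenerator

variable {K L : Type*} [Field K] [Field L] [Algebra K L] {g : K[X]} {x : L}

theorem finiteDimensional_and_finrank_eq_of_adjoin_eq_top (hirr : Irreducible g) (hmonic : g.Monic)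
    (hx : aeval x g = 0) (hadj : Algebra.adjoin K {x} = ⊤) :
    FiniteDimensional K L ∧ finrank K L = g.natDegree := by
  let pb := PowerBasis.ofAdjoinEqTop' ⟨g, hmonic, hx⟩ hadj
  refine ⟨pb.finite, ?_⟩
  rw [pb.finrank, minpoly.eq_of_irreducible_of_monic hirr hx hmonic]
  rfl

theorem isSeparable_of_adjoin_eq_top (hirr : Irreducible g) (hmonic : g.Monic) (hsep : g.Separable)
    (hx : aeval x g = 0) (hadj : Algebra.adjoin K {x} = ⊤) : Algebra.IsSeparable K L := by
  have hint : IsIntegral K x := ⟨g, hmonic, hx⟩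
  have htop : IntermediateField.adjoin K {x} = ⊤ := by
    rw [← IntermediateField.toSubalgebra_inj,
      IntermediateField.adjoin_simple_toSubalgebra_of_isAlgebraic hint.isAlgebraic, hadj]
    rfl
  have : Algebra.IsSeparable K (IntermediateField.adjoin K {x}) := by
    rw [IntermediateField.isSeparable_adjoin_simple_iff_isSeparable, IsSeparable,
      ← minpoly.eq_of_irreducible_of_monic hirr hx hmonic]
    exact hsep
  exact AlgEquiv.Algebra.isSeparable ((IntermediateField.equivOfEq htop).trans
    IntermediateField.topEquiv)

end SimpleGenerator

namespace Submodule

variable {R B L : Type*} [CommSemiring R] [CommSemiring B] [Semiring L] [Algebra R L] [Algebra B L]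

def restrictScalarsOfLift (S : Submodule B L)
    (hRB : ∀ r : R, ∃ b : B, algebraMap B L b = algebraMap R L r) : Submodule R L where
  carrier := S
  add_mem' := S.add_mem
  zero_mem' := S.zero_mem
  smul_mem' r z hz := by
    obtain ⟨b, hb⟩ := hRB r
    rw [Algebra.smul_def, ← hb, ← Algebra.smul_def]
    exact S.smul_mem b hz

end Submodule

section QuotOrder

variable {R : Type*} [CommRing R] {L : Type*} [Field L] [Algebra R L]
  {B : Type*} [CommRing B] [Algebra B L]
  (hRB : ∀ r : R, ∃ b : B, algebraMap B L b = algebraMap R L r) (x : L)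

/-- `J / (J ∩ R[x])`, as an `R`-module. -/
abbrev quotOrder (J : Submodule B L) : Type _ :=
  J.restrictScalarsOfLift hRB ⧸
    (Subalgebra.toSubmodule (Algebra.adjoin R {x})).comap (J.restrictScalarsOfLift hRB).subtype

theorem exists_injective_quotOrder_of_le {J J' : Submodule B L} (h : J ≤ J') :
    ∃ φ : quotOrder hRB x J →ₗ[R] quotOrder hRB x J', Function.Injective φ := by
  let i := Submodule.inclusion (p := J.restrictScalarsOfLift hRB)
    (p' := J'.restrictScalarsOfLift hRB) h
  refine ⟨Submodule.mapQ _ _ i fun _ hz => hz, (injective_iff_map_eq_zero _).mpr fun q hq => ?_⟩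
  obtain ⟨y, rfl⟩ := Submodule.mkQ_surjective _ q
  have hiy : Submodule.Quotient.mk (i y) = (0 : quotOrder hRB x J') := hq
  have hyO := (Submodule.Quotient.mk_eq_zero _).mp hiy
  exact (Submodule.Quotient.mk_eq_zero _).mpr hyO

variable {hRB x}

theorem exists_isTorsionBy_quotOrder [IsDomain R] {K : Type*} [Field K] [Algebra R K]
    [IsFractionRing R K] [Algebra K L] [IsScalarTower R K L] (hx : Algebra.adjoin K {x} = ⊤)
    {J : Submodule B L} (hJ : (J.restrictScalarsOfLift hRB).FG) :
    ∃ a : R, a ≠ 0 ∧ IsTorsionBy R (quotOrder hRB x J) a :=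
  have := Module.Finite.iff_fg.mpr hJ
  exists_isTorsionBy_quotient fun y => exists_smul_mem_adjoin_of_adjoin_eq_top hx (y : L)

theorem fg_restrictScalarsOfLift [IsDomain R] [IsIntegrallyClosed R] [IsNoetherianRing R]
    {K : Type*} [Field K] [Algebra R K] [IsFractionRing R K] [Algebra K L] [IsScalarTower R K L]
    [FiniteDimensional K L] [Algebra.IsSeparable K L] [IsFractionRing B L]
    (hBint : ∀ b : B, IsIntegral R (algebraMap B L b)) (J : FractionalIdeal B⁰ L) :
    ((J : Submodule B L).restrictScalarsOfLift hRB).FG := by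
  obtain ⟨a, ha, hJ⟩ := J.isFractional
  have hu : algebraMap B L a ≠ 0 := (IsLocalization.map_units L ⟨a, ha⟩).ne_zero
  have hC : (Subalgebra.toSubmodule (integralClosure R L)).FG :=
    Module.Finite.iff_fg.mp (IsIntegralClosure.finite R K L (integralClosure R L))
  refine (hC.map (LinearMap.mulLeft R (algebraMap B L a)⁻¹)).of_le fun z hz => ?_
  obtain ⟨c, hc⟩ := hJ z hz
  refine ⟨algebraMap B L a * z, ?_, inv_mul_cancel_left₀ hu z⟩
  rw [← Algebra.smul_def, ← hc]
  exact hBint c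

end QuotOrder

section Polynomial

variable {k : Type*} [Field k] {L : Type*} [Field L] [Algebra k[X] L]
  {B : Type*} [CommRing B] [Algebra B L]
  {hRB : ∀ r : k[X], ∃ b : B, algebraMap B L b = algebraMap k[X] L r} {x : L}

theorem normExp_eq_minTorsionDegree_quotOrder [Algebra (RatFunc k) L]
    [IsScalarTower k[X] (RatFunc k) L] (J : FractionalIdeal B⁰ L) :
    normExp k L B x J = minTorsionDegree k (quotOrder hRB x J) := by
  refine congrArg sInf (Set.ext fun d => exists_congr fun a => and_congr_right fun _ =>
    and_congr_right fun _ => ?_)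
  rw [isTorsionBy_quotient_iff, Subtype.forall]
  refine forall₂_congr fun z _ => ?_
  rw [← IsScalarTower.algebraMap_apply, ← Algebra.smul_def]
  rfl

variable [Algebra k L] [IsScalarTower k k[X] L]

theorem finite_and_finrank_quotOrder_le [Algebra (RatFunc k) L] [IsScalarTower k[X] (RatFunc k) L]
    [FiniteDimensional (RatFunc k) L] [Algebra.IsSeparable (RatFunc k) L] [IsFractionRing B L]
    (hBint : ∀ b : B, IsIntegral k[X] (algebraMap B L b)) (J : FractionalIdeal B⁰ L)
    (h : ∃ a : k[X], a ≠ 0 ∧ IsTorsionBy k[X] (quotOrder hRB x J) a) :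
    Module.Finite k (quotOrder hRB x J) ∧
      finrank k (quotOrder hRB x J) ≤
        finrank (RatFunc k) L * minTorsionDegree k (quotOrder hRB x J) := by
  have := Module.Finite.iff_fg.mpr (fg_restrictScalarsOfLift (hRB := hRB) (K := RatFunc k) hBint J)
  have : Module.IsTorsionFree k[X] L := Module.isTorsionFree_iff_algebraMap_injective.mpr <| by
    rw [IsScalarTower.algebraMap_eq k[X] (RatFunc k) L]
    exact (algebraMap (RatFunc k) L).injective.comp (IsFractionRing.injective _ _)
  have := Module.free_of_finite_type_torsion_free' (R := k[X])
    (M := (J : Submodule B L).restrictScalarsOfLift hRB)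
  obtain ⟨hfin, hle⟩ := finite_and_finrank_quotient_le h
  exact ⟨hfin, hle.trans (Nat.mul_le_mul_right _
    (Submodule.finrank_le_finrank_fractionRing (K := RatFunc k) _))⟩

variable [Algebra k B] [IsScalarTower k B L]

variable (hRB x) in
noncomputable def quotOrderEquiv (J : Submodule B L) :
    (J.restrictScalars k ⧸ Submodule.comap (J.restrictScalars k).subtype
      ((Subalgebra.toSubmodule (Algebra.adjoin k[X] {x})).restrictScalars k)) ≃ₗ[k]
      quotOrder hRB x J :=
  let e : J.restrictScalars k ≃ₗ[k] J.restrictScalarsOfLift hRB :=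
    { toFun z := ⟨z.1, z.2⟩
      invFun z := ⟨z.1, z.2⟩
      map_add' _ _ := rfl
      map_smul' _ _ := rfl }
  (Submodule.Quotient.equiv _ _ e (by
      ext y
      refine ⟨?_, fun hy => ⟨e.symm y, hy, e.apply_symm_apply y⟩⟩
      rintro ⟨z, hz, rfl⟩
      exact hz)).trans
    (Submodule.Quotient.restrictScalarsEquiv k _)

theorem normIdx_eq_finrank_quotOrder [Algebra (RatFunc k) L] (J : FractionalIdeal B⁰ L) :
    normIdx k L B x J = finrank k (quotOrder hRB x J) :=
  (quotOrderEquiv hRB x J).finrank_eq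

end Polynomial

theorem stmt_7_general
    {k : Type*} [Field k]
    {L : Type*} [Field L] [Algebra (RatFunc k) L]
    (f : Polynomial (Polynomial k)) (n : ℕ)
    (hfn : f.natDegree = n)
    (hfmonic : f.Monic)
    (hfirr : Irreducible (f.map (algebraMap (Polynomial k) (RatFunc k))))
    (hfsep : (f.map (algebraMap (Polynomial k) (RatFunc k))).Separable)
    (x : L)
    (hx : Polynomial.aeval x (f.map (algebraMap (Polynomial k) (RatFunc k))) = 0)
    (hxgen : Algebra.adjoin (RatFunc k) ({x} : Set L) = ⊤)
    (B : Type*) [CommRing B]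
    [Algebra B L] [IsFractionRing B L]
    (hB : ∀ z : L, (∃ b : B, algebraMap B L b = z) ↔
      ((algebraMap (RatFunc k) L).comp (algebraMap (Polynomial k) (RatFunc k))).IsIntegralElem z)
    [Algebra (Polynomial k) L] [IsScalarTower (Polynomial k) (RatFunc k) L]
    [Algebra k L] [IsScalarTower k (Polynomial k) L]
    [Algebra k B] [IsScalarTower k B L]
    (I : FractionalIdeal (nonZeroDivisors B) L)
    (qI : RatFunc k) (hqI0 : qI ≠ 0)
    (hqI : ∀ z : RatFunc k, algebraMap (RatFunc k) L z ∈ I ↔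
      ∃ c : Polynomial k, z = qI * algebraMap (Polynomial k) (RatFunc k) c)
    (Istar : FractionalIdeal (nonZeroDivisors B) L)
    (hIstar : Istar =
      FractionalIdeal.spanSingleton (nonZeroDivisors B) (algebraMap (RatFunc k) L qI)⁻¹ * I) :
    (∀ z : L, z ∈ Algebra.adjoin (Polynomial k) ({x} : Set L) →
      ∃ b : B, algebraMap B L b = z) ∧
    (∀ b : B, algebraMap B L b ∈ Istar) ∧
    Module.Finite k
      ((Submodule.restrictScalars k (Istar : Submodule B L)) ⧸
        (Submodule.comap (Submodule.restrictScalars k (Istar : Submodule B L)).subtype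
          (Submodule.restrictScalars k
            (Subalgebra.toSubmodule (Algebra.adjoin (Polynomial k) ({x} : Set L)))))) ∧
    (normExp k L B x Istar ≤ normIdx k L B x Istar ∧
      normIdx k L B x Istar ≤ n * normExp k L B x Istar) ∧
    (normIdx k L B x (1 : FractionalIdeal (nonZeroDivisors B) L) ≤ normIdx k L B x Istar ∧
      normExp k L B x (1 : FractionalIdeal (nonZeroDivisors B) L) ≤ normExp k L B x Istar) := by
  have hBiff : ∀ z : L, (∃ b : B, algebraMap B L b = z) ↔ IsIntegral k[X] z := fun z => by
    rw [hB z, ← IsScalarTower.algebraMap_eq]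
    rfl
  have hRB : ∀ r : k[X], ∃ b : B, algebraMap B L b = algebraMap k[X] L r :=
    fun r => (hBiff _).mpr isIntegral_algebraMap
  have hBint : ∀ b : B, IsIntegral k[X] (algebraMap B L b) := fun b => (hBiff _).mp ⟨b, rfl⟩
  have hxint : IsIntegral k[X] x :=
    ⟨f, hfmonic, by rw [← aeval_def, ← aeval_map_algebraMap (RatFunc k), hx]⟩
  have hB_le : (1 : FractionalIdeal B⁰ L) ≤ Istar := by
    rw [FractionalIdeal.one_le, hIstar, FractionalIdeal.mem_singleton_mul]
    exact ⟨_, (hqI qI).mpr ⟨1, by simp⟩, (inv_mul_cancel₀ (by simpa using hqI0)).symm⟩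
  obtain ⟨_, hrank⟩ := finiteDimensional_and_finrank_eq_of_adjoin_eq_top hfirr
    (hfmonic.map _) hx hxgen
  have := isSeparable_of_adjoin_eq_top hfirr (hfmonic.map _) hfsep hx hxgen
  obtain ⟨a, ha, haQ⟩ := exists_isTorsionBy_quotOrder (hRB := hRB) hxgen
    (fg_restrictScalarsOfLift (K := RatFunc k) hBint Istar)
  obtain ⟨hfin, hle⟩ := finite_and_finrank_quotOrder_le hBint Istar ⟨a, ha, haQ⟩
  obtain ⟨φ, hφ⟩ :=
    exists_injective_quotOrder_of_le hRB x (FractionalIdeal.coe_le_coe.mpr hB_le)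
  refine ⟨fun z hz => (hBiff z).mpr (adjoin_le_integralClosure hxint hz),
    fun b => hB_le ((FractionalIdeal.mem_one_iff _).mpr ⟨b, rfl⟩),
    Module.Finite.equiv (quotOrderEquiv hRB x _).symm, ?_, ?_⟩
  all_goals simp only [normIdx_eq_finrank_quotOrder (hRB := hRB),
    normExp_eq_minTorsionDegree_quotOrder (hRB := hRB)]
  · rw [← hfn, ← hfmonic.natDegree_map (algebraMap k[X] (RatFunc k)), ← hrank]
    exact ⟨minTorsionDegree_le_finrank, hle⟩
  · exact ⟨LinearMap.finrank_le_finrank_of_injective (f := φ.restrictScalars k) hφ,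
      minTorsionDegree_le_of_injective hφ ⟨a, ha, haQ⟩⟩

/-- `k[t][x] ⊆ B ⊆ I*`, the normalized index is finite, and
`exp(I) ≤ δ_I ≤ n·exp(I)`, `δ_B ≤ δ_I`, `exp(B) ≤ exp(I)`. -/
theorem stmt_7
    {k : Type*} [Field k] [PerfectField k]
    {L : Type*} [Field L] [Algebra (RatFunc k) L]
    (f : Polynomial (Polynomial k)) (n : ℕ)
    (hfn : f.natDegree = n) (hn : 0 < n)
    (hfmonic : f.Monic)
    (hfirr : Irreducible (f.map (algebraMap (Polynomial k) (RatFunc k))))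
    (hfsep : (f.map (algebraMap (Polynomial k) (RatFunc k))).Separable)
    (x : L)
    (hx : Polynomial.aeval x (f.map (algebraMap (Polynomial k) (RatFunc k))) = 0)
    (hxgen : Algebra.adjoin (RatFunc k) ({x} : Set L) = ⊤)
    (B : Type*) [CommRing B] [IsDomain B] [IsDedekindDomain B]
    [Algebra B L] [IsFractionRing B L]
    (hB : ∀ z : L, (∃ b : B, algebraMap B L b = z) ↔
      ((algebraMap (RatFunc k) L).comp (algebraMap (Polynomial k) (RatFunc k))).IsIntegralElem z)
    [Algebra (Polynomial k) L] [IsScalarTower (Polynomial k) (RatFunc k) L]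
    [Algebra k L] [IsScalarTower k (Polynomial k) L] [IsScalarTower k (RatFunc k) L]
    [Algebra k B] [IsScalarTower k B L]
    (I : FractionalIdeal (nonZeroDivisors B) L) (hI : I ≠ 0)
    (qI : RatFunc k) (hqI0 : qI ≠ 0)
    (hqI : ∀ z : RatFunc k, algebraMap (RatFunc k) L z ∈ I ↔
      ∃ c : Polynomial k, z = qI * algebraMap (Polynomial k) (RatFunc k) c)
    (Istar : FractionalIdeal (nonZeroDivisors B) L)
    (hIstar : Istar =
      FractionalIdeal.spanSingleton (nonZeroDivisors B) (algebraMap (RatFunc k) L qI)⁻¹ * I) :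
    (∀ z : L, z ∈ Algebra.adjoin (Polynomial k) ({x} : Set L) →
      ∃ b : B, algebraMap B L b = z) ∧
    (∀ b : B, algebraMap B L b ∈ Istar) ∧
    Module.Finite k
      ((Submodule.restrictScalars k (Istar : Submodule B L)) ⧸
        (Submodule.comap (Submodule.restrictScalars k (Istar : Submodule B L)).subtype
          (Submodule.restrictScalars k
            (Subalgebra.toSubmodule (Algebra.adjoin (Polynomial k) ({x} : Set L)))))) ∧
    (normExp k L B x Istar ≤ normIdx k L B x Istar ∧
      normIdx k L B x Istar ≤ n * normExp k L B x Istar) ∧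
    (normIdx k L B x (1 : FractionalIdeal (nonZeroDivisors B) L) ≤ normIdx k L B x Istar ∧
      normExp k L B x (1 : FractionalIdeal (nonZeroDivisors B) L) ≤ normExp k L B x Istar) :=
  stmt_7_general f n hfn hfmonic hfirr hfsep x hx hxgen B hB I qI hqI0 hqI Istar hIstar
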